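/- For α ∈ F_{q^n}, the set {α, α^q, ..., α^{q^{n-1}}} is a normal basis of F_{q^n} over F_q if and only if the polynomials x^n - 1 and g_α(x) = α x^{n-1} + α^q x^{n-2} + ... + α^{q^{n-2}} x + α^{q^{n-1}} in F_{q^n}[x] are relatively prime. -/

import Mathlib

/-! Let `σ` be the Frobenius, an automorphism of `L/K` of order `n`, and let `t` be the class of
`X` in `R = L[X]/(X^n - 1)`. Coprimality of `X^n - 1` and `g_α` says that `g_α(t)` is a unit of
`R`, i.e. (as `R` is finite-dimensional over `L`) not a zero divisor. Since `t^n = 1`,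
`(∑ c_j t^j) g_α(t) = ∑_k (∑_j c_j σ^(j+k) α) t^(n-1-k)`. A relation `∑ a_j σ^j α = 0` over `K`
gives, after applying `σ^k`, a nonzero annihilator `∑ a_j t^j` of `g_α(t)`. Conversely, a nonzero
annihilator `∑ c_j t^j` makes `∑ c_j σ^j` vanish on every `σ^k α`, hence on all of `L` if these
form a basis, contradicting Dedekind's independence of the characters `σ^j`. -/

open Polynomial

theorem Ideal.Quotient.isUnit_mk_span_singleton_iff {R : Type*} [CommRing R] {a b : R} :
    IsUnit (Ideal.Quotient.mk (Ideal.span {a}) b) ↔ IsCoprime a b := by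
  constructor
  · rintro ⟨⟨_, w, _, hw⟩, rfl⟩
    obtain ⟨v, rfl⟩ := Ideal.Quotient.mk_surjective w
    obtain ⟨u, hu⟩ := (Ideal.Quotient.eq_zero_iff_dvd a (v * b - 1)).mp
      (by rw [map_sub, map_mul, hw, map_one, sub_self])
    exact ⟨-u, v, by linear_combination hu⟩
  · rintro ⟨u, v, h⟩
    refine isUnit_iff_exists_inv'.mpr ⟨Ideal.Quotient.mk _ v, ?_⟩
    simpa [Ideal.Quotient.mk_singleton_self] using congrArg (Ideal.Quotient.mk (Ideal.span {a})) h

section RootOfUnity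

variable (A : Type*) [CommRing A] (n : ℕ)

theorem AdjoinRoot.root_X_pow_sub_one_pow : AdjoinRoot.root (X ^ n - 1 : A[X]) ^ n = 1 := by
  have := AdjoinRoot.mk_self (f := (X ^ n - 1 : A[X]))
  rwa [map_sub, map_pow, AdjoinRoot.mk_X, map_one, sub_eq_zero] at this

variable [NeZero n]

theorem Polynomial.monic_X_pow_sub_one : (X ^ n - 1 : A[X]).Monic := by
  simpa using monic_X_pow_sub_C (1 : A) (NeZero.ne n)

variable [Nontrivial A]

noncomputable def rootPowBasis : Module.Basis (Fin n) A (AdjoinRoot (X ^ n - 1 : A[X])) :=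
  (AdjoinRoot.powerBasis' (monic_X_pow_sub_one A n)).basis.reindex
    (finCongr (by simpa using natDegree_X_pow_sub_C (R := A) (n := n) (r := 1)))

theorem rootPowBasis_apply (i : Fin n) :
    rootPowBasis A n i = AdjoinRoot.root (X ^ n - 1 : A[X]) ^ (i : ℕ) := by
  simp [rootPowBasis]

end RootOfUnity

theorem pow_finVal_add {M : Type*} [Monoid M] {n : ℕ} {x : M} (hx : x ^ n = 1) (i j : Fin n) :
    x ^ ((i + j : Fin n) : ℕ) = x ^ (i : ℕ) * x ^ (j : ℕ) := by
  rw [Fin.val_add, ← pow_eq_pow_mod _ hx, pow_add]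

theorem Fin.add_rev_add {n : ℕ} [NeZero n] (j k : Fin n) : j + (j + k).rev = k.rev := by
  rw [add_comm j k, Fin.rev_add, add_sub_cancel]

theorem sum_smul_pow_mul_sum_smul_pow_rev {S A : Type*} [CommSemiring S] [CommSemiring A]
    [Algebra S A] {n : ℕ} [NeZero n] {t : A} (ht : t ^ n = 1) (c a : Fin n → S) :
    (∑ j, c j • t ^ (j : ℕ)) * ∑ i, a i • t ^ (i.rev : ℕ) =
      ∑ k, (∑ j, c j * a (j + k)) • t ^ (k.rev : ℕ) := by
  calc (∑ j, c j • t ^ (j : ℕ)) * ∑ i, a i • t ^ (i.rev : ℕ)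
      = ∑ j, ∑ k, c j • t ^ (j : ℕ) * a (j + k) • t ^ ((j + k).rev : ℕ) := by
        rw [Finset.sum_mul_sum]
        exact Finset.sum_congr rfl fun j _ => (Equiv.sum_comp (Equiv.addLeft j) _).symm
    _ = ∑ k, (∑ j, c j * a (j + k)) • t ^ (k.rev : ℕ) := by
        rw [Finset.sum_comm]
        refine Finset.sum_congr rfl fun k _ => ?_
        rw [Finset.sum_smul]
        refine Finset.sum_congr rfl fun j _ => ?_
        rw [← Fin.add_rev_add j k, pow_finVal_add ht, smul_mul_smul_comm, mul_smul]

section CyclicExtension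

variable {K L : Type*} [Field K] [Field L] [Algebra K L] {n : ℕ}

/-- The polynomial `g_α` of the statement, with `σ` in place of the Frobenius. -/
noncomputable def conjugatesPoly (σ : L ≃ₐ[K] L) (n : ℕ) (α : L) : L[X] :=
  ∑ i ∈ Finset.range n, C ((σ ^ i) α) * X ^ (n - 1 - i)

theorem mk_conjugatesPoly (σ : L ≃ₐ[K] L) (α : L) :
    AdjoinRoot.mk (X ^ n - 1) (conjugatesPoly σ n α) =
      ∑ i : Fin n, (σ ^ (i : ℕ)) α • AdjoinRoot.root (X ^ n - 1 : L[X]) ^ (i.rev : ℕ) := by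
  rw [conjugatesPoly, map_sum, ← Fin.sum_univ_eq_sum_range]
  refine Finset.sum_congr rfl fun i _ => ?_
  rw [map_mul, AdjoinRoot.mk_C, map_pow, AdjoinRoot.mk_X, Algebra.smul_def, Fin.val_rev,
    Nat.sub_sub, add_comm 1]
  rfl

theorem linearIndependent_pow_toLinearMap {σ : L ≃ₐ[K] L} (hσ : orderOf σ = n) :
    LinearIndependent L fun j : Fin n => (σ ^ (j : ℕ)).toLinearMap := by
  refine (linearIndependent_toLinearMap K L L).comp (fun j : Fin n => (σ ^ (j : ℕ)).toAlgHom)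
    fun i j hij => Fin.ext (pow_injOn_Iio_orderOf ?_ ?_ (AlgEquiv.coe_toAlgHom_injective hij))
  · simp [hσ]
  · simp [hσ]

variable [NeZero n]

theorem mul_mk_conjugatesPoly_eq_zero_iff {σ : L ≃ₐ[K] L} (hσ : σ ^ n = 1) (α : L)
    (c : Fin n → L) :
    (∑ j, c j • AdjoinRoot.root (X ^ n - 1 : L[X]) ^ (j : ℕ)) *
        AdjoinRoot.mk (X ^ n - 1) (conjugatesPoly σ n α) = 0 ↔
      ∀ k : Fin n, ∑ j, c j * (σ ^ (j : ℕ) * σ ^ (k : ℕ)) α = 0 := by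
  have hli : LinearIndependent L fun k : Fin n =>
      AdjoinRoot.root (X ^ n - 1 : L[X]) ^ (k.rev : ℕ) := by
    simpa [Function.comp_def, rootPowBasis_apply] using
      (rootPowBasis L n).linearIndependent.comp _ Fin.rev_injective
  rw [mk_conjugatesPoly, sum_smul_pow_mul_sum_smul_pow_rev (AdjoinRoot.root_X_pow_sub_one_pow L n)]
  simp_rw [← pow_finVal_add hσ]
  refine ⟨Fintype.linearIndependent_iff.mp hli _, fun h => ?_⟩
  simp only [h, zero_smul, Finset.sum_const_zero]

theorem linearIndependent_of_isCoprime {σ : L ≃ₐ[K] L} (hσ : σ ^ n = 1) (α : L)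
    (h : IsCoprime (X ^ n - 1 : L[X]) (conjugatesPoly σ n α)) :
    LinearIndependent K fun i : Fin n => (σ ^ (i : ℕ)) α := by
  rw [Fintype.linearIndependent_iff]
  intro a ha
  have hunit : IsUnit (AdjoinRoot.mk (X ^ n - 1) (conjugatesPoly σ n α)) :=
    Ideal.Quotient.isUnit_mk_span_singleton_iff.mpr h
  have hannihilates : (∑ j, algebraMap K L (a j) • AdjoinRoot.root (X ^ n - 1 : L[X]) ^ (j : ℕ)) *
      AdjoinRoot.mk (X ^ n - 1) (conjugatesPoly σ n α) = 0 := by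
    refine (mul_mk_conjugatesPoly_eq_zero_iff hσ α _).mpr fun k => ?_
    calc ∑ j, algebraMap K L (a j) * (σ ^ (j : ℕ) * σ ^ (k : ℕ)) α
        = (σ ^ (k : ℕ)) (∑ j, a j • (σ ^ (j : ℕ)) α) := by
          rw [map_sum]
          refine Finset.sum_congr rfl fun j _ => ?_
          rw [map_smul, Algebra.smul_def, pow_mul_comm, AlgEquiv.mul_apply]
      _ = 0 := by rw [ha, map_zero]
  have hsum := hunit.mul_left_eq_zero.mp hannihilates
  simp_rw [← rootPowBasis_apply] at hsum
  intro i
  simpa using Fintype.linearIndependent_iff.mp (rootPowBasis L n).linearIndependent _ hsum i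

theorem eq_zero_of_forall_sum_mul_pow_apply_eq_zero {σ : L ≃ₐ[K] L} (hσ : orderOf σ = n)
    (hrank : Module.finrank K L = n) {α : L}
    (h : LinearIndependent K fun i : Fin n => (σ ^ (i : ℕ)) α) (c : Fin n → L)
    (hc : ∀ k : Fin n, ∑ j, c j * (σ ^ (j : ℕ) * σ ^ (k : ℕ)) α = 0) : c = 0 := by
  have hvanish : ∑ j, c j • (σ ^ (j : ℕ)).toLinearMap = 0 := by
    refine (basisOfLinearIndependentOfCardEqFinrank h (by simp [hrank])).ext fun k => ?_
    rw [coe_basisOfLinearIndependentOfCardEqFinrank]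
    simpa using hc k
  have hli := linearIndependent_pow_toLinearMap hσ
  rw [Fintype.linearIndependent_iff] at hli
  exact funext (hli c hvanish)

theorem isCoprime_of_linearIndependent {σ : L ≃ₐ[K] L} (hσ : orderOf σ = n)
    (hrank : Module.finrank K L = n) (α : L)
    (h : LinearIndependent K fun i : Fin n => (σ ^ (i : ℕ)) α) :
    IsCoprime (X ^ n - 1 : L[X]) (conjugatesPoly σ n α) := by
  rw [← Ideal.Quotient.isUnit_mk_span_singleton_iff]
  have := (monic_X_pow_sub_one L n).finite_adjoinRoot
  have : IsArtinianRing (AdjoinRoot (X ^ n - 1 : L[X])) := .of_finite L _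
  change IsUnit (AdjoinRoot.mk (X ^ n - 1) (conjugatesPoly σ n α))
  rw [IsArtinianRing.isUnit_iff_mem_nonZeroDivisors, mem_nonZeroDivisors_iff_right]
  intro x hx
  rw [← (rootPowBasis L n).sum_repr x] at hx
  simp only [rootPowBasis_apply] at hx
  rw [mul_mk_conjugatesPoly_eq_zero_iff (hσ ▸ pow_orderOf_eq_one σ)] at hx
  have hc := eq_zero_of_forall_sum_mul_pow_apply_eq_zero hσ hrank h _ hx
  exact (rootPowBasis L n).repr.map_eq_zero_iff.mp (Finsupp.ext (congrFun hc))

theorem linearIndependent_iff_isCoprime {σ : L ≃ₐ[K] L} (hσ : orderOf σ = n)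
    (hrank : Module.finrank K L = n) (α : L) :
    LinearIndependent K (fun i : Fin n => (σ ^ (i : ℕ)) α) ↔
      IsCoprime (X ^ n - 1 : L[X]) (conjugatesPoly σ n α) :=
  ⟨isCoprime_of_linearIndependent hσ hrank α,
    linearIndependent_of_isCoprime (hσ ▸ pow_orderOf_eq_one σ) α⟩

end CyclicExtension

theorem stmt7_general (q n : ℕ) (hn : 0 < n)
    (K : Type*) [Field K] [Fintype K] (hK : Fintype.card K = q)
    (L : Type*) [Field L] [Fintype L] [Algebra K L]
    (hrank : Module.finrank K L = n)
    (α : L) :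
    (∃ b : Module.Basis (Fin n) K L, ∀ i : Fin n, b i = α ^ q ^ (i : ℕ)) ↔
      IsCoprime (Polynomial.X ^ n - 1 : Polynomial L)
        (∑ i ∈ Finset.range n,
          Polynomial.C (α ^ q ^ i) * Polynomial.X ^ (n - 1 - i)) := by
  have : NeZero n := ⟨hn.ne'⟩
  have hfrob : ∀ i : ℕ, (FiniteField.frobeniusAlgEquivOfAlgebraic K L ^ i) α = α ^ q ^ i := by
    intro i
    rw [AlgEquiv.coe_pow, FiniteField.coe_frobeniusAlgEquivOfAlgebraic_iterate, hK]
  have key := linearIndependent_iff_isCoprime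
    ((FiniteField.orderOf_frobeniusAlgEquivOfAlgebraic K L).trans hrank) hrank α
  simp only [conjugatesPoly, hfrob] at key
  rw [← key]
  refine ⟨fun ⟨b, hb⟩ => funext hb ▸ b.linearIndependent, fun h => ?_⟩
  exact ⟨basisOfLinearIndependentOfCardEqFinrank h (by simp [hrank]),
    fun i => by rw [coe_basisOfLinearIndependentOfCardEqFinrank]⟩

theorem stmt7 (q n : ℕ) (hq : 1 < q) (hn : 0 < n)
    (K : Type*) [Field K] [Fintype K] (hK : Fintype.card K = q)
    (L : Type*) [Field L] [Fintype L] [Algebra K L]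
    (hrank : Module.finrank K L = n)
    (α : L) :
    (∃ b : Module.Basis (Fin n) K L, ∀ i : Fin n, b i = α ^ q ^ (i : ℕ)) ↔
      IsCoprime (Polynomial.X ^ n - 1 : Polynomial L)
        (∑ i ∈ Finset.range n,
          Polynomial.C (α ^ q ^ i) * Polynomial.X ^ (n - 1 - i)) :=
  stmt7_general q n hn K hK L hrank α
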